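/- Gradient lower bound near the critical hypersurface (intermediate claim in the proof of Proposition 5.4): Let H:ℝ^{2n}→ℝ be C² with sup_x‖Hess_xH‖≤M, M>0. Let v̄∈ℝ^{2n} with H(v̄)=0 and ‖∇H(v̄)‖≥1/2, let v be a loop and η∈ℝ such that ∫₀¹(v(t)−v̄)dt ∈ ℝ·∇H(v̄), and set d:=‖v−v̄‖_{L²}+|η|. If d≤1/(6M), then ‖∇𝒜^H(v,η)‖ ≥ d/12. -/

import Mathlib

open MeasureTheory intervalIntegral Set
open scoped RealInnerProductSpace Topology

noncomputable section

/-- Phase space `ℝ^{2n}`, realized as `ℂ^n` with its real inner product. -/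
abbrev E (n : ℕ) := EuclideanSpace ℂ (Fin n)

/-- The standard linear complex structure `J₀` (multiplication by `i`). -/
def J0 {n : ℕ} (x : E n) : E n := Complex.I • x

/-- The standard symplectic form `ω₀(u,w) = ⟨J₀u, w⟩`. -/
def om {n : ℕ} (u w : E n) : ℝ := @inner ℝ _ _ (J0 u) w

/-- The Hamiltonian vector field `X^H = J₀ ∇H`. -/
def XH {n : ℕ} (H : E n → ℝ) (x : E n) : E n := J0 (gradient H x)

/-- A loop: a smooth 1-periodic map `ℝ → ℝ^{2n}`. -/
def IsLoop {n : ℕ} (v : ℝ → E n) : Prop := ContDiff ℝ (⊤ : ℕ∞) v ∧ ∀ t, v (t + 1) = v t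

/-- The `L²` norm on loops. -/
def L2 {n : ℕ} (v : ℝ → E n) : ℝ := Real.sqrt (∫ t in (0:ℝ)..1, ‖v t‖ ^ 2)

/-- The Rabinowitz action functional. -/
def RabAction {n : ℕ} (H : E n → ℝ) (v : ℝ → E n) (η : ℝ) : ℝ :=
  (∫ t in (0:ℝ)..1, (1 / 2) * om (v t) (deriv v t)) - η * ∫ t in (0:ℝ)..1, H (v t)

/-- The norm `‖∇𝒜^H(v,η)‖ = ‖∂_t v − η X^H(v)‖_{L²} + |∫₀¹ H(v)|` of the `L²` gradient. -/
def gradNorm {n : ℕ} (H : E n → ℝ) (v : ℝ → E n) (η : ℝ) : ℝ :=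
  L2 (fun t => deriv v t - η • XH H (v t)) + |∫ t in (0:ℝ)..1, H (v t)|

/-- A Liouville vector field on a set `U`. -/
def IsLiouvilleOn {n : ℕ} (X : E n → E n) (U : Set (E n)) : Prop :=
  ∀ x ∈ U, ∀ u w : E n, om (fderiv ℝ X x u) w + om u (fderiv ℝ X x w) = om u w

/-- Condition (H1). -/
def SatH1 {n : ℕ} (H : E n → ℝ) (c₁ c₂ c₃ : ℝ) : Prop :=
  ∃ X : E n → E n, ContDiff ℝ (⊤ : ℕ∞) X ∧ IsLiouvilleOn X Set.univ ∧
    (∀ x, ‖X x‖ ≤ c₁ * (‖x‖ + 1)) ∧ ∀ x, fderiv ℝ H x (X x) ≥ c₂ * ‖x‖ ^ 2 - c₃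

/-- Condition (H2). -/
def SatH2 {n : ℕ} (H : E n → ℝ) (L : ℝ) : Prop :=
  ∀ x, ‖iteratedFDeriv ℝ 3 H x‖ * ‖x‖ ≤ L

/-- Condition (H3). -/
def SatH3 {n : ℕ} (H : E n → ℝ) (c₄ c₅ ν : ℝ) : Prop :=
  ∃ X : E n → E n, IsLiouvilleOn X (H ⁻¹' Ioo (-ν) ν) ∧
    (∀ x ∈ H ⁻¹' Ioo (-ν) ν, ‖X x‖ ≤ c₄ * (‖x‖ ^ 2 + 1)) ∧
    ∀ x ∈ H ⁻¹' Ioo (-ν) ν, fderiv ℝ H x (X x) ≥ c₅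

/-- Admissible Hamiltonians. -/
def Admissible {n : ℕ} (H : E n → ℝ) : Prop :=
  ContDiff ℝ (⊤ : ℕ∞) H ∧ ∃ c₁ c₂ c₃ L c₄ c₅ ν : ℝ,
    0 < c₁ ∧ 0 < c₂ ∧ 0 ≤ c₃ ∧ 0 ≤ L ∧ 0 < c₄ ∧ 0 < c₅ ∧ 0 < ν ∧
    SatH1 H c₁ c₂ c₃ ∧ SatH2 H L ∧ SatH3 H c₄ c₅ ν

/-- Uniform bound on the Hessian. -/
def HessBound {n : ℕ} (H : E n → ℝ) (M : ℝ) : Prop :=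
  ∀ x, ‖iteratedFDeriv ℝ 2 H x‖ ≤ M

/-- Linear growth of the gradient. -/
def GradBound {n : ℕ} (H : E n → ℝ) (M h₁ : ℝ) : Prop :=
  ∀ x, ‖gradient H x‖ ≤ h₁ + M * ‖x‖


lemma abs_integral_le_sqrt (f : ℝ → ℝ) (hf : Continuous f) :
    |∫ t in (0:ℝ)..1, f t| ≤ Real.sqrt (∫ t in (0:ℝ)..1, (f t)^2) := by
  set a := ∫ t in (0:ℝ)..1, f t with ha
  have hint : IntervalIntegrable f volume 0 1 := hf.intervalIntegrable _ _
  have hint2 : IntervalIntegrable (fun t => (f t)^2) volume 0 1 := (hf.pow 2).intervalIntegrable _ _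
  have h0 : (0:ℝ) ≤ ∫ t in (0:ℝ)..1, (f t - a)^2 :=
    intervalIntegral.integral_nonneg zero_le_one (fun t _ => sq_nonneg _)
  have hexp : ∫ t in (0:ℝ)..1, (f t - a)^2
      = (∫ t in (0:ℝ)..1, (f t)^2) - 2*a*a + a^2 := by
    have : (fun t => (f t - a)^2) = fun t => ((f t)^2 - (2*a)*(f t) + a^2) := by
      funext t; ring
    rw [this, intervalIntegral.integral_add ((hint2.sub ((hint.const_mul (2*a)))))
      (intervalIntegrable_const), intervalIntegral.integral_sub hint2 (hint.const_mul (2*a)),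
      intervalIntegral.integral_const_mul, intervalIntegral.integral_const]
    simp [← ha]
  have hle : a^2 ≤ ∫ t in (0:ℝ)..1, (f t)^2 := by nlinarith
  have := Real.sqrt_le_sqrt hle
  rwa [Real.sqrt_sq_eq_abs] at this

lemma young_opt {A B C : ℝ} (hA : 0 ≤ A) (hB : 0 ≤ B)
    (h : ∀ t : ℝ, 0 < t → C ≤ A + B + t*A + B/t) :
    C ≤ (Real.sqrt A + Real.sqrt B)^2 := by
  have hs : (Real.sqrt A + Real.sqrt B)^2 = A + B + 2*Real.sqrt (A*B) := by
    rw [add_sq, Real.sq_sqrt hA, Real.sq_sqrt hB, Real.sqrt_mul hA]; ring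
  rw [hs]
  rcases eq_or_lt_of_le hA with hA0 | hA0
  · have hCB : C ≤ B := by
      refine le_of_forall_pos_le_add (fun ε hε => ?_)
      rcases eq_or_lt_of_le hB with hB0 | hB0
      · have := h 1 one_pos
        simp [← hA0, ← hB0] at this
        linarith
      · have := h (B/ε) (div_pos hB0 hε)
        rw [← hA0] at this
        have hBε : B / (B/ε) = ε := by field_simp
        simp [hBε] at this
        linarith
    nlinarith [Real.sqrt_nonneg (A*B)]
  · rcases eq_or_lt_of_le hB with hB0 | hB0
    · have hCA : C ≤ A := by
        refine le_of_forall_pos_le_add (fun ε hε => ?_)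
        have h' := h (ε/A) (div_pos hε hA0)
        rw [← hB0] at h'
        have h'' : C ≤ A + ε/A*A := by simpa using h'
        rwa [div_mul_cancel₀ _ (ne_of_gt hA0)] at h''
      nlinarith [Real.sqrt_nonneg (A*B)]
    · have hmain := h (Real.sqrt (B/A)) (Real.sqrt_pos.2 (div_pos hB0 hA0))
      have h1 : Real.sqrt (B/A) * A = Real.sqrt (A*B) := by
        rw [show A*B = (B/A)*A^2 by field_simp, Real.sqrt_mul (le_of_lt (div_pos hB0 hA0)),
          Real.sqrt_sq hA]
      have hne : Real.sqrt (B/A) ≠ 0 := ne_of_gt (Real.sqrt_pos.2 (div_pos hB0 hA0))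
      have hprod : Real.sqrt (A*B) * Real.sqrt (B/A) = B := by
        rw [← Real.sqrt_mul (mul_nonneg hA hB),
          show A*B*(B/A) = B^2 by field_simp, Real.sqrt_sq hB]
      have h2 : B / Real.sqrt (B/A) = Real.sqrt (A*B) := by
        rw [div_eq_iff hne]; linarith
      linarith

lemma young2 {x y t : ℝ} (ht : 0 < t) : (x+y)^2 ≤ (1+t)*x^2 + (1+1/t)*y^2 := by
  have h2 : (2*x*y)*t ≤ t^2*x^2 + y^2 := by nlinarith [sq_nonneg (t*x - y)]
  have h1 : 2*x*y ≤ t*x^2 + y^2/t := by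
    rw [show t*x^2 + y^2/t = (t^2*x^2+y^2)/t by field_simp, le_div_iff₀ ht]
    linarith
  have hr : (1+1/t)*y^2 = y^2 + y^2/t := by ring
  nlinarith [h1]

lemma L2_nonneg {n : ℕ} (f : ℝ → E n) : 0 ≤ L2 f := Real.sqrt_nonneg _

lemma int_sq_nonneg {n : ℕ} (f : ℝ → E n) : 0 ≤ ∫ t in (0:ℝ)..1, ‖f t‖^2 :=
  intervalIntegral.integral_nonneg zero_le_one (fun t _ => sq_nonneg _)

lemma L2_sq {n : ℕ} (f : ℝ → E n) : (L2 f)^2 = ∫ t in (0:ℝ)..1, ‖f t‖^2 :=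
  Real.sq_sqrt (int_sq_nonneg f)

lemma L2_le_sqrt {n : ℕ} (f : ℝ → E n) (φ : ℝ → ℝ) (hf : Continuous f) (hφ : Continuous φ)
    (h : ∀ t ∈ Icc (0:ℝ) 1, ‖f t‖ ≤ φ t) : L2 f ≤ Real.sqrt (∫ t in (0:ℝ)..1, (φ t)^2) := by
  apply Real.sqrt_le_sqrt
  apply intervalIntegral.integral_mono_on zero_le_one
    ((hf.norm.pow 2).intervalIntegrable _ _) ((hφ.pow 2).intervalIntegrable _ _)
  exact fun t ht => pow_le_pow_left₀ (norm_nonneg _) (h t ht) 2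

lemma L2_add_le {n : ℕ} (f g : ℝ → E n) (hf : Continuous f) (hg : Continuous g) :
    L2 (fun t => f t + g t) ≤ L2 f + L2 g := by
  set A := ∫ t in (0:ℝ)..1, ‖f t‖^2 with hA
  set B := ∫ t in (0:ℝ)..1, ‖g t‖^2 with hB
  have hintf : IntervalIntegrable (fun t => ‖f t‖^2) volume 0 1 :=
    (hf.norm.pow 2).intervalIntegrable _ _
  have hintg : IntervalIntegrable (fun t => ‖g t‖^2) volume 0 1 :=
    (hg.norm.pow 2).intervalIntegrable _ _
  have key : ∀ t : ℝ, 0 < t →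
      (∫ s in (0:ℝ)..1, ‖f s + g s‖^2) ≤ A + B + t*A + B/t := by
    intro t ht
    have hmono : (∫ s in (0:ℝ)..1, ‖f s + g s‖^2)
        ≤ ∫ s in (0:ℝ)..1, ((1+t)*‖f s‖^2 + (1+1/t)*‖g s‖^2) := by
      apply intervalIntegral.integral_mono_on zero_le_one
        (((hf.add hg).norm.pow 2).intervalIntegrable _ _)
        (((continuous_const.mul (hf.norm.pow 2)).add (continuous_const.mul (hg.norm.pow 2))).intervalIntegrable _ _)
      intro s _
      calc ‖f s + g s‖^2 ≤ (‖f s‖ + ‖g s‖)^2 :=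
            pow_le_pow_left₀ (norm_nonneg _) (norm_add_le _ _) 2
        _ ≤ (1+t)*‖f s‖^2 + (1+1/t)*‖g s‖^2 := young2 ht
    have heq : (∫ s in (0:ℝ)..1, ((1+t)*‖f s‖^2 + (1+1/t)*‖g s‖^2))
        = (1+t)*A + (1+1/t)*B := by
      rw [intervalIntegral.integral_add (hintf.const_mul _) (hintg.const_mul _),
        intervalIntegral.integral_const_mul, intervalIntegral.integral_const_mul]
    have : (1+t)*A + (1+1/t)*B = A + B + t*A + B/t := by ring
    linarith
  have hyoung := young_opt (int_sq_nonneg f) (int_sq_nonneg g) key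
  calc L2 (fun t => f t + g t) ≤ Real.sqrt ((Real.sqrt A + Real.sqrt B)^2) :=
        Real.sqrt_le_sqrt hyoung
    _ = Real.sqrt A + Real.sqrt B := Real.sqrt_sq (by positivity)
    _ = L2 f + L2 g := rfl

lemma integral_inner_const {n : ℕ} (f : ℝ → E n) (hf : Continuous f) (a : E n) :
    ∫ t in (0:ℝ)..1, ⟪a, f t⟫ = ⟪a, ∫ t in (0:ℝ)..1, f t⟫ := by
  rw [intervalIntegral.integral_of_le zero_le_one, intervalIntegral.integral_of_le zero_le_one]
  exact integral_inner hf.integrableOn_Ioc a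

lemma pythagoras {n : ℕ} (f : ℝ → E n) (hf : Continuous f)
    (hmean : ∫ t in (0:ℝ)..1, f t = 0) (a : E n) :
    ∫ t in (0:ℝ)..1, ‖f t - a‖^2 = (∫ t in (0:ℝ)..1, ‖f t‖^2) + ‖a‖^2 := by
  have hptwise : ∀ t, ‖f t - a‖^2 = ‖f t‖^2 - 2*⟪a, f t⟫ + ‖a‖^2 := by
    intro t
    rw [norm_sub_sq_real, real_inner_comm]
  have h1 : IntervalIntegrable (fun t => ‖f t‖^2) volume 0 1 :=
    (hf.norm.pow 2).intervalIntegrable _ _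
  have hci : Continuous fun t => ⟪a, f t⟫ := continuous_const.inner hf
  have h2 : IntervalIntegrable (fun t => 2*⟪a, f t⟫) volume 0 1 :=
    (continuous_const.mul hci).intervalIntegrable _ _
  calc ∫ t in (0:ℝ)..1, ‖f t - a‖^2
      = ∫ t in (0:ℝ)..1, (‖f t‖^2 - 2*⟪a, f t⟫ + ‖a‖^2) := by
        simp_rw [hptwise]
    _ = (∫ t in (0:ℝ)..1, ‖f t‖^2) - (∫ t in (0:ℝ)..1, 2*⟪a, f t⟫)
        + ∫ t in (0:ℝ)..1, (‖a‖^2 : ℝ) := by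
        rw [intervalIntegral.integral_add (h1.sub h2) intervalIntegrable_const,
          intervalIntegral.integral_sub h1 h2]
    _ = (∫ t in (0:ℝ)..1, ‖f t‖^2) + ‖a‖^2 := by
        rw [intervalIntegral.integral_const_mul, integral_inner_const f hf a, hmean]
        simp

lemma grad_inner {n : ℕ} (H : E n → ℝ) (x u : E n) :
    ⟪gradient H x, u⟫ = fderiv ℝ H x u := InnerProductSpace.toDual_symm_apply

lemma grad_cont {n : ℕ} (H : E n → ℝ) (hH : ContDiff ℝ 2 H) : Continuous (gradient H) := by
  have h1 : Continuous (fderiv ℝ H) := (hH.fderiv_right (m := 1) (by norm_num)).continuous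
  exact (InnerProductSpace.toDual ℝ (E n)).symm.continuous.comp h1

lemma grad_lipschitz {n : ℕ} (H : E n → ℝ) (hH : ContDiff ℝ 2 H) {M : ℝ}
    (hHess : HessBound H M) (x y : E n) :
    ‖gradient H x - gradient H y‖ ≤ M * ‖x - y‖ := by
  have hdiff : Differentiable ℝ (fderiv ℝ H) :=
    (hH.fderiv_right (m := 1) (by norm_num)).differentiable one_ne_zero
  have hbound : ∀ z, ‖fderiv ℝ (fderiv ℝ H) z‖ ≤ M := by
    intro z
    calc ‖fderiv ℝ (fderiv ℝ H) z‖
        = ‖iteratedFDeriv ℝ 0 (fderiv ℝ (fderiv ℝ H)) z‖ := by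
          rw [norm_iteratedFDeriv_zero]
      _ = ‖iteratedFDeriv ℝ 1 (fderiv ℝ H) z‖ := norm_iteratedFDeriv_fderiv
      _ = ‖iteratedFDeriv ℝ 2 H z‖ := norm_iteratedFDeriv_fderiv
      _ ≤ M := hHess z
  have key := Convex.norm_image_sub_le_of_norm_fderiv_le
    (f := fderiv ℝ H) (fun z _ => hdiff z)
    (fun z _ => hbound z) convex_univ (mem_univ y) (mem_univ x)
  have heq : gradient H x - gradient H y
      = (InnerProductSpace.toDual ℝ (E n)).symm (fderiv ℝ H x - fderiv ℝ H y) := by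
    rw [map_sub]; rfl
  rw [heq, LinearIsometryEquiv.norm_map]
  exact key

lemma taylor_bound {n : ℕ} (H : E n → ℝ) (hH : ContDiff ℝ 2 H) {M : ℝ} (hM : 0 ≤ M)
    (hHess : HessBound H M) (vb y : E n) :
    |H y - H vb - ⟪gradient H vb, y - vb⟫| ≤ M/2 * ‖y - vb‖^2 := by
  set u := y - vb with hu
  have hdiffH : Differentiable ℝ H := hH.differentiable two_ne_zero
  have hφ : ∀ s : ℝ, HasDerivAt (fun s : ℝ => H (vb + s • u))
      (fderiv ℝ H (vb + s • u) u) s := by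
    intro s
    have hline : HasDerivAt (fun s : ℝ => vb + s • u) u s := by
      simpa using ((hasDerivAt_id s).smul_const u).const_add vb
    exact ((hdiffH (vb + s • u)).hasFDerivAt).comp_hasDerivAt s hline
  have hcont : Continuous (fun s : ℝ => fderiv ℝ H (vb + s • u) u) := by
    have h1 : Continuous (fderiv ℝ H) := (hH.fderiv_right (m := 1) (by norm_num)).continuous
    exact (h1.comp (continuous_const.add (continuous_id.smul continuous_const))).clm_apply
      continuous_const
  have hFTC : ∫ s in (0:ℝ)..1, fderiv ℝ H (vb + s • u) u
      = H y - H vb := by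
    rw [intervalIntegral.integral_eq_sub_of_hasDerivAt (fun s _ => hφ s)
      (hcont.intervalIntegrable _ _)]
    simp [hu]
  have hsplit : H y - H vb - ⟪gradient H vb, u⟫
      = ∫ s in (0:ℝ)..1, (fderiv ℝ H (vb + s • u) u - ⟪gradient H vb, u⟫) := by
    rw [intervalIntegral.integral_sub (hcont.intervalIntegrable _ _) intervalIntegrable_const,
      hFTC, intervalIntegral.integral_const]
    simp
  rw [hsplit]
  have hptw : ∀ s ∈ Icc (0:ℝ) 1,
      ‖fderiv ℝ H (vb + s • u) u - ⟪gradient H vb, u⟫‖ ≤ M * ‖u‖^2 * s := by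
    intro s hs
    have h1 : fderiv ℝ H (vb + s • u) u - ⟪gradient H vb, u⟫
        = ⟪gradient H (vb + s • u) - gradient H vb, u⟫ := by
      rw [inner_sub_left, grad_inner, grad_inner]
    rw [h1, Real.norm_eq_abs]
    calc |⟪gradient H (vb + s • u) - gradient H vb, u⟫|
        ≤ ‖gradient H (vb + s • u) - gradient H vb‖ * ‖u‖ := abs_real_inner_le_norm _ _
      _ ≤ (M * ‖(vb + s • u) - vb‖) * ‖u‖ := by
          gcongr; exact grad_lipschitz H hH hHess _ _
      _ = M * ‖u‖^2 * s := by
          rw [add_sub_cancel_left, norm_smul, Real.norm_eq_abs, abs_of_nonneg hs.1]; ring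
  calc |∫ s in (0:ℝ)..1, (fderiv ℝ H (vb + s • u) u - ⟪gradient H vb, u⟫)|
      ≤ ∫ s in (0:ℝ)..1, ‖fderiv ℝ H (vb + s • u) u - ⟪gradient H vb, u⟫‖ := by
        simpa [Real.norm_eq_abs] using
          intervalIntegral.norm_integral_le_integral_norm (f := fun s =>
            fderiv ℝ H (vb + s • u) u - ⟪gradient H vb, u⟫) zero_le_one
    _ ≤ ∫ s in (0:ℝ)..1, M * ‖u‖^2 * s := by
        apply intervalIntegral.integral_mono_on zero_le_one
          ((hcont.sub continuous_const).norm.intervalIntegrable _ _)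
          ((continuous_const.mul continuous_id).intervalIntegrable _ _)
        exact hptw
    _ = M/2 * ‖u‖^2 := by
        rw [intervalIntegral.integral_const_mul, integral_id]
        ring

lemma le_of_sq_le_sq' {a b : ℝ} (ha : 0 ≤ a) (hb : 0 ≤ b) (h : a^2 ≤ b^2) : a ≤ b := by
  nlinarith [sq_nonneg (a - b), sq_nonneg (a + b)]

set_option maxHeartbeats 1000000 in
/-- **Gradient lower bound near the critical hypersurface (intermediate claim in the
proof of Proposition 5.4).** -/
theorem gradient_lower_bound_near_critical_set {n : ℕ} (H : E n → ℝ)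
    (hH : ContDiff ℝ 2 H) (M : ℝ) (hM : 0 < M) (hHess : HessBound H M)
    (vb : E n) (h0 : H vb = 0) (hg : (1:ℝ) / 2 ≤ ‖gradient H vb‖)
    (v : ℝ → E n) (hv : IsLoop v) (η : ℝ)
    (hnormal : ∃ c : ℝ, (∫ t in (0:ℝ)..1, (v t - vb)) = c • gradient H vb)
    (hd : L2 (fun t => v t - vb) + |η| ≤ 1 / (6 * M)) :
    (L2 (fun t => v t - vb) + |η|) / 12 ≤ gradNorm H v η := by
  unfold gradNorm
  obtain ⟨hsm, hper⟩ := hv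
  obtain ⟨c, hc⟩ := hnormal
  set K := gradient H vb with hK
  set w : ℝ → E n := fun t => v t - vb with hwdef
  set D : ℝ := L2 w + |η| with hD
  set G : ℝ := L2 (fun t => deriv v t - η • XH H (v t)) with hG
  set F : ℝ := |∫ t in (0:ℝ)..1, H (v t)| with hF
  have hcv : Continuous v := hsm.continuous
  have hcdv : Continuous (deriv v) := hsm.continuous_deriv (by simp)
  have hcw : Continuous w := hcv.sub continuous_const
  have hgc : Continuous (gradient H) := grad_cont H hH
  have hgvc : Continuous fun t => gradient H (v t) := hgc.comp hcv
  have hGnn : 0 ≤ G := L2_nonneg _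
  have hFnn : 0 ≤ F := abs_nonneg _
  have hDnn : 0 ≤ D := add_nonneg (L2_nonneg _) (abs_nonneg _)
  have hL2w : L2 w ≤ D := by rw [hD]; linarith [abs_nonneg η]
  have hetaD : |η| ≤ D := by rw [hD]; linarith [L2_nonneg w]
  have h6 : M * D ≤ 1/6 := by
    have h' := mul_le_mul_of_nonneg_left hd hM.le
    rwa [show M*(1/(6*M)) = 1/6 by field_simp] at h'
  have hMD2 : M * D^2 ≤ D/6 := by nlinarith
  have hintw2 : ∫ t in (0:ℝ)..1, ‖w t‖^2 ≤ D^2 := by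
    rw [← L2_sq]
    exact pow_le_pow_left₀ (L2_nonneg w) hL2w 2
  have hder0 : ∫ t in (0:ℝ)..1, deriv v t = 0 := by
    rw [intervalIntegral.integral_deriv_eq_sub
      (fun x _ => (hsm.differentiable (by simp)).differentiableAt)
      (hcdv.intervalIntegrable _ _)]
    rw [show v 1 = v 0 by simpa using hper 0]
    simp
  set wb : E n := ∫ t in (0:ℝ)..1, w t with hwb
  have hcK : wb = c • K := hc
  have hwbK : ‖wb‖ = |c| * ‖K‖ := by rw [hcK, norm_smul, Real.norm_eq_abs]
  have hHvcont : Continuous fun t => H (v t) := hH.continuous.comp hcv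
  have hKw_cont : Continuous fun t => (⟪K, w t⟫ : ℝ) := continuous_const.inner hcw
  -- ===== F bound =====
  have hwb_le : ‖wb‖ ≤ 2*F + D/6 := by
    have hinn : ∫ t in (0:ℝ)..1, (⟪K, w t⟫ : ℝ) = ⟪K, wb⟫ := integral_inner_const w hcw K
    have hKwb : (⟪K, wb⟫ : ℝ) = c * ‖K‖^2 := by
      rw [hcK, real_inner_smul_right, real_inner_self_eq_norm_sq]
    have hsplit : (∫ t in (0:ℝ)..1, H (v t))
        = (∫ t in (0:ℝ)..1, (⟪K, w t⟫ : ℝ)) + ∫ t in (0:ℝ)..1, (H (v t) - ⟪K, w t⟫) := by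
      rw [← intervalIntegral.integral_add (f := fun t => (⟪K, w t⟫ : ℝ))
        (g := fun t => H (v t) - ⟪K, w t⟫) (hKw_cont.intervalIntegrable _ _)
        ((hHvcont.sub hKw_cont).intervalIntegrable _ _)]
      simp
    have hr_bound : ∀ t ∈ Icc (0:ℝ) 1, |H (v t) - ⟪K, w t⟫| ≤ M/2 * ‖w t‖^2 := by
      intro t _
      have h' := taylor_bound H hH hM.le hHess vb (v t)
      rw [h0, sub_zero] at h'
      exact h'
    have habs_r : |∫ t in (0:ℝ)..1, (H (v t) - ⟪K, w t⟫)| ≤ M/2 * D^2 := by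
      have hstep1 : |∫ t in (0:ℝ)..1, (H (v t) - ⟪K, w t⟫)|
          ≤ ∫ t in (0:ℝ)..1, |H (v t) - ⟪K, w t⟫| := by
        simpa [Real.norm_eq_abs] using
          intervalIntegral.norm_integral_le_integral_norm
            (f := fun t => H (v t) - ⟪K, w t⟫) zero_le_one
      have hstep2 : (∫ t in (0:ℝ)..1, |H (v t) - ⟪K, w t⟫|)
          ≤ ∫ t in (0:ℝ)..1, M/2 * ‖w t‖^2 :=
        intervalIntegral.integral_mono_on zero_le_one
          ((hHvcont.sub hKw_cont).abs.intervalIntegrable _ _)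
          ((continuous_const.mul (hcw.norm.pow 2)).intervalIntegrable _ _) hr_bound
      have hstep3 : (∫ t in (0:ℝ)..1, M/2 * ‖w t‖^2) = M/2 * ∫ t in (0:ℝ)..1, ‖w t‖^2 :=
        intervalIntegral.integral_const_mul _ _
      have hstep4 : M/2 * (∫ t in (0:ℝ)..1, ‖w t‖^2) ≤ M/2 * D^2 := by
        apply mul_le_mul_of_nonneg_left hintw2 (by positivity)
      linarith
    have hKwabs : |∫ t in (0:ℝ)..1, (⟪K, w t⟫ : ℝ)| = ‖wb‖ * ‖K‖ := by
      rw [hinn, hKwb, abs_mul, abs_of_nonneg (by positivity : (0:ℝ) ≤ ‖K‖^2), hwbK]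
      ring
    have htri : ‖wb‖ * ‖K‖ ≤ F + M/2 * D^2 := by
      rw [← hKwabs]
      have : (∫ t in (0:ℝ)..1, (⟪K, w t⟫ : ℝ))
          = (∫ t in (0:ℝ)..1, H (v t)) - ∫ t in (0:ℝ)..1, (H (v t) - ⟪K, w t⟫) := by
        rw [hsplit]; ring
      rw [this]
      calc |(∫ t in (0:ℝ)..1, H (v t)) - ∫ t in (0:ℝ)..1, (H (v t) - ⟪K, w t⟫)|
          ≤ |∫ t in (0:ℝ)..1, H (v t)| + |∫ t in (0:ℝ)..1, (H (v t) - ⟪K, w t⟫)| :=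
            abs_sub _ _
        _ ≤ F + M/2 * D^2 := by rw [hF]; linarith
    have hKhalf : ‖wb‖ * (1/2) ≤ ‖wb‖ * ‖K‖ :=
      mul_le_mul_of_nonneg_left hg (norm_nonneg wb)
    have hhalf : M/2 * D^2 ≤ D/12 := by linarith
    linarith
  -- ===== G bounds via Pythagoras and Minkowski =====
  set a0 : E n := η • (Complex.I • K) with ha0def
  set q : ℝ → E n := fun t => η • (Complex.I • (gradient H (v t) - K)) with hqdef
  have hqcont : Continuous q := (((hgvc.sub continuous_const).const_smul Complex.I).const_smul η)
  have hgcont : Continuous fun t => deriv v t - η • XH H (v t) :=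
    hcdv.sub ((hgvc.const_smul Complex.I).const_smul η)
  have hfun : (fun t => deriv v t - a0)
      = fun t => (deriv v t - η • XH H (v t)) + q t := by
    funext t
    simp only [XH, J0, hqdef, ha0def, smul_sub]
    abel
  set P : ℝ := L2 (fun t => deriv v t - a0) with hP
  have hP2 : P^2 = (∫ t in (0:ℝ)..1, ‖deriv v t‖^2) + ‖a0‖^2 := by
    rw [hP, L2_sq]
    exact pythagoras (deriv v) hcdv hder0 a0
  have ha0norm : ‖a0‖ = |η| * ‖K‖ := by
    rw [ha0def, norm_smul, norm_smul, Real.norm_eq_abs]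
    simp
  have hPa : |η| * ‖K‖ ≤ P := by
    apply le_of_sq_le_sq' (by positivity) (L2_nonneg _)
    rw [hP2, ← ha0norm]
    linarith [int_sq_nonneg (deriv v)]
  have hPd : L2 (deriv v) ≤ P := by
    refine le_of_sq_le_sq' (L2_nonneg _) (L2_nonneg _) ?_
    rw [hP2, L2_sq]
    nlinarith [norm_nonneg a0]
  have hq_le : L2 q ≤ D/6 := by
    have hpt : ∀ t ∈ Icc (0:ℝ) 1, ‖q t‖ ≤ (|η| * M) * ‖w t‖ := by
      intro t _
      rw [hqdef]
      simp only [norm_smul, Real.norm_eq_abs]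
      have h1 : ‖gradient H (v t) - K‖ ≤ M * ‖w t‖ := by
        rw [hK, hwdef]
        exact grad_lipschitz H hH hHess (v t) vb
      calc |η| * (‖Complex.I‖ * ‖gradient H (v t) - K‖)
          = |η| * ‖gradient H (v t) - K‖ := by simp
        _ ≤ |η| * (M * ‖w t‖) := mul_le_mul_of_nonneg_left h1 (abs_nonneg η)
        _ = (|η| * M) * ‖w t‖ := by ring
    have h2 := L2_le_sqrt q (fun t => (|η| * M) * ‖w t‖) hqcont
      (continuous_const.mul hcw.norm) hpt
    have h3 : (∫ t in (0:ℝ)..1, ((|η| * M) * ‖w t‖)^2)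
        = (|η| * M)^2 * ∫ t in (0:ℝ)..1, ‖w t‖^2 := by
      simp_rw [mul_pow]
      exact intervalIntegral.integral_const_mul _ _
    have h4 : Real.sqrt ((|η| * M)^2 * ∫ t in (0:ℝ)..1, ‖w t‖^2)
        = (|η| * M) * L2 w := by
      rw [Real.sqrt_mul (sq_nonneg _), Real.sqrt_sq (by positivity)]
      rfl
    have h5 : L2 q ≤ (|η| * M) * L2 w := by
      rw [h3, h4] at h2; exact h2
    have h6' : (|η| * M) * L2 w ≤ M * D^2 := by
      have hx : |η| * L2 w ≤ D * D := mul_le_mul hetaD hL2w (L2_nonneg w) hDnn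
      have hy := mul_le_mul_of_nonneg_left hx hM.le
      nlinarith [hy]
    exact le_trans h5 (le_trans h6' hMD2)
  have hPG : P ≤ G + D/6 := by
    have := L2_add_le (fun t => deriv v t - η • XH H (v t)) q hgcont hqcont
    rw [hP, hfun]
    calc L2 (fun t => (deriv v t - η • XH H (v t)) + q t)
        ≤ L2 (fun t => deriv v t - η • XH H (v t)) + L2 q := this
      _ ≤ G + D/6 := by rw [hG]; linarith
  have hetaG : |η| ≤ 2*G + D/3 := by
    have h' : |η| * (1/2) ≤ |η| * ‖K‖ := mul_le_mul_of_nonneg_left hg (abs_nonneg η)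
    linarith
  have hdvG : L2 (deriv v) ≤ G + D/6 := le_trans hPd hPG
  -- ===== Poincare =====
  set A : ℝ := ∫ t in (0:ℝ)..1, ‖deriv v t‖ with hA
  have hAnn : 0 ≤ A :=
    intervalIntegral.integral_nonneg zero_le_one (fun _ _ => norm_nonneg _)
  have hkey : ∀ s t : ℝ, s ∈ Icc (0:ℝ) 1 → t ∈ Icc (0:ℝ) 1 → s ≤ t → ‖v t - v s‖ ≤ A := by
    intro s t hs ht hst
    have hftc : ∫ r in s..t, deriv v r = v t - v s :=
      intervalIntegral.integral_deriv_eq_sub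
        (fun x _ => (hsm.differentiable (by simp)).differentiableAt)
        (hcdv.intervalIntegrable _ _)
    rw [← hftc]
    calc ‖∫ r in s..t, deriv v r‖ ≤ ∫ r in s..t, ‖deriv v r‖ :=
          intervalIntegral.norm_integral_le_integral_norm hst
      _ ≤ A := intervalIntegral.integral_mono_interval hs.1 hst ht.2
          (Filter.Eventually.of_forall fun _ => norm_nonneg _)
          (hcdv.norm.intervalIntegrable _ _)
  have hvts : ∀ t ∈ Icc (0:ℝ) 1, ∀ s ∈ Icc (0:ℝ) 1, ‖v t - v s‖ ≤ A := by
    intro t ht s hs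
    rcases le_total s t with hst | hst
    · exact hkey s t hs ht hst
    · rw [norm_sub_rev]; exact hkey t s ht hs hst
  have hwhat_pt : ∀ t ∈ Icc (0:ℝ) 1, ‖w t - wb‖ ≤ A := by
    intro t ht
    have h1 : w t - wb = ∫ s in (0:ℝ)..1, (w t - w s) := by
      rw [intervalIntegral.integral_sub intervalIntegrable_const
        (hcw.intervalIntegrable _ _), intervalIntegral.integral_const]
      simp [hwb]
    rw [h1]
    calc ‖∫ s in (0:ℝ)..1, (w t - w s)‖ ≤ ∫ s in (0:ℝ)..1, ‖w t - w s‖ :=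
          intervalIntegral.norm_integral_le_integral_norm zero_le_one
      _ ≤ ∫ s in (0:ℝ)..1, A := by
          apply intervalIntegral.integral_mono_on zero_le_one
            ((continuous_const.sub hcw).norm.intervalIntegrable _ _)
            intervalIntegrable_const
          intro s hs
          have : w t - w s = v t - v s := sub_sub_sub_cancel_right _ _ _
          show ‖w t - w s‖ ≤ A
          rw [this]
          exact hvts t ht s hs
      _ = A := by simp
  have hL2hat : L2 (fun t => w t - wb) ≤ A := by
    have h2 := L2_le_sqrt (fun t => w t - wb) (fun _ => A)
      (hcw.sub continuous_const) continuous_const hwhat_pt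
    have h3 : (∫ _t in (0:ℝ)..1, A^2) = A^2 := by simp
    rw [h3, Real.sqrt_sq hAnn] at h2
    exact h2
  have hACS : A ≤ L2 (deriv v) := by
    have h' := abs_integral_le_sqrt (fun t => ‖deriv v t‖) hcdv.norm
    rw [← hA, abs_of_nonneg hAnn] at h'
    exact h'
  have hwhatG : L2 (fun t => w t - wb) ≤ G + D/6 :=
    le_trans hL2hat (le_trans hACS hdvG)
  -- ===== decomposition of w =====
  have hmean0 : ∫ t in (0:ℝ)..1, (w t - wb) = 0 := by
    rw [intervalIntegral.integral_sub (hcw.intervalIntegrable _ _) intervalIntegrable_const,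
      intervalIntegral.integral_const]
    simp [hwb]
  have hpyth2 : (∫ t in (0:ℝ)..1, ‖w t‖^2)
      = (∫ t in (0:ℝ)..1, ‖w t - wb‖^2) + ‖wb‖^2 := by
    have h' := pythagoras (fun t => w t - wb) (hcw.sub continuous_const) hmean0 (-wb)
    simpa [sub_neg_eq_add, sub_add_cancel, norm_neg] using h'
  have hsum1 : L2 w ≤ L2 (fun t => w t - wb) + ‖wb‖ := by
    refine le_of_sq_le_sq' (L2_nonneg w) (add_nonneg (L2_nonneg _) (norm_nonneg _)) ?_
    rw [L2_sq, hpyth2]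
    nlinarith [L2_nonneg (fun t => w t - wb), norm_nonneg wb,
      L2_sq (fun t => w t - wb)]
  -- ===== conclusion =====
  linarith
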